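/- Let (G, K_D) be a deterministic mass action system on n species. If (G, K_D) has a positive reaction balanced state c ∈ ℝ^n_{>0}, then within every positive stoichiometric compatibility class of (G, K_D) there exists exactly one positive equilibrium, and every equilibrium of (G, K_D) is a reaction balanced state. -/

import Mathlib

open scoped ENNReal NNReal BigOperators Classical

noncomputable section

namespace CRN

/-- A complex: a vector in `ℤ_{≥0}^n`. -/
abbrev Cplx (n : ℕ) := Fin n → ℕ

/-- A reaction: an ordered pair of complexes (source, target). -/
abbrev Reaction (n : ℕ) := Cplx n × Cplx n

/-- A reaction network on `n` species: a finite set of reactions, each with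
distinct source and target. -/
structure Network (n : ℕ) where
  R : Finset (Reaction n)
  ne_src_tgt : ∀ r ∈ R, r.1 ≠ r.2

/-- The complexes of a network: vectors occurring as source or target of some reaction. -/
def Network.C {n : ℕ} (G : Network n) : Finset (Cplx n) :=
  G.R.image Prod.fst ∪ G.R.image Prod.snd

/-- A network is reversible if `y → y' ∈ R` implies `y' → y ∈ R`. -/
def Network.Reversible {n : ℕ} (G : Network n) : Prop :=
  ∀ r ∈ G.R, (r.2, r.1) ∈ G.R

/-- A network is weakly reversible if every reaction is contained in a closed
directed path `y_1 → y_2 → ⋯ → y_k` with `k ≥ 2` and `y_1 = y_k`. -/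
def Network.WeaklyReversible {n : ℕ} (G : Network n) : Prop :=
  ∀ r ∈ G.R, ∃ (k : ℕ) (ys : ℕ → Cplx n), 2 ≤ k ∧ ys 0 = ys (k - 1) ∧
    (∀ i, i < k - 1 → (ys i, ys (i + 1)) ∈ G.R) ∧
    (∃ i, i < k - 1 ∧ (ys i, ys (i + 1)) = r)

/-- Embedding of a complex into `ℝ^n`. -/
def toR {n : ℕ} (y : Cplx n) : Fin n → ℝ := fun i => (y i : ℝ)

/-- Embedding of a complex into `ℤ^n`. -/
def toZ {n : ℕ} (y : Cplx n) : Fin n → ℤ := fun i => (y i : ℤ)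

/-- Deterministic kinetics: a nonnegative rate function for each reaction,
zero for pairs which are not reactions of the network. -/
structure DetKin {n : ℕ} (G : Network n) where
  rate : Reaction n → (Fin n → ℝ) → ℝ
  nonneg : ∀ r z, 0 ≤ rate r z
  zero_off : ∀ r, r ∉ G.R → ∀ z, rate r z = 0

/-- Stochastic kinetics: a nonnegative rate function on `ℤ^n` for each reaction,
zero for pairs which are not reactions of the network. -/
structure StochKin {n : ℕ} (G : Network n) where
  rate : Reaction n → (Fin n → ℤ) → ℝ≥0
  zero_off : ∀ r, r ∉ G.R → ∀ x, rate r x = 0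

namespace Det

variable {n : ℕ} {G : Network n}

/-- `c` is an equilibrium: `∑_{y→y'∈R} (y'−y) λ_{y→y'}(c) = 0`. -/
def IsEquilibrium (Λ : DetKin G) (c : Fin n → ℝ) : Prop :=
  ∑ r ∈ G.R, Λ.rate r c • (toR r.2 - toR r.1) = 0

/-- `c` is reaction balanced (detailed balanced). -/
def ReactionBalanced (Λ : DetKin G) (c : Fin n → ℝ) : Prop :=
  ∀ y ∈ G.C, ∀ y' ∈ G.C, Λ.rate (y, y') c = Λ.rate (y', y) c

/-- `c` is complex balanced. -/
def ComplexBalanced (Λ : DetKin G) (c : Fin n → ℝ) : Prop :=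
  ∀ y ∈ G.C, ∑ y' ∈ G.C, Λ.rate (y, y') c = ∑ y' ∈ G.C, Λ.rate (y', y) c

/-- `c` is reaction vector balanced. -/
def RVBalanced (Λ : DetKin G) (c : Fin n → ℝ) : Prop :=
  ∀ ξ : Fin n → ℝ,
    ∑ r ∈ G.R.filter (fun r => toR r.2 - toR r.1 = ξ), Λ.rate r c =
    ∑ r ∈ G.R.filter (fun r => toR r.2 - toR r.1 = -ξ), Λ.rate r c

/-- `c` is cycle balanced. -/
def CycleBalanced (Λ : DetKin G) (c : Fin n → ℝ) : Prop :=
  ∀ j : ℕ, 3 ≤ j → ∀ ys : ℕ → Cplx n,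
    (∀ i < j, ys i ∈ G.C) →
    (∀ i < j, ∀ k < j, ys i = ys k → i = k) →
    ∏ i ∈ Finset.range j, Λ.rate (ys i, ys ((i + 1) % j)) c =
    ∏ i ∈ Finset.range j, Λ.rate (ys ((i + 1) % j), ys i) c

/-- The active subnetwork at a state `c`: the reactions with positive rate at `c`. -/
def activeSub (Λ : DetKin G) (c : Fin n → ℝ) : Network n :=
  ⟨G.R.filter (fun r => 0 < Λ.rate r c),
   fun r hr => G.ne_src_tgt r (Finset.mem_filter.mp hr).1⟩

end Det

/-- The stoichiometric subspace: the span of the reaction vectors. -/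
def stoichSubspace {n : ℕ} (G : Network n) : Submodule ℝ (Fin n → ℝ) :=
  Submodule.span ℝ ((fun r : Reaction n => toR r.2 - toR r.1) '' (G.R : Set (Reaction n)))

/-- The stoichiometric compatibility class of `v`: `(v + S) ∩ ℝ^n_{≥0}`. -/
def compatClass {n : ℕ} (G : Network n) (v : Fin n → ℝ) : Set (Fin n → ℝ) :=
  {z | z - v ∈ stoichSubspace G ∧ ∀ i, 0 ≤ z i}

/-- A measure on `ℤ^n`: a function with values in `[0,∞]`. -/
abbrev Meas (n : ℕ) := (Fin n → ℤ) → ℝ≥0∞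

namespace Stoch

variable {n : ℕ} {G : Network n}

def IsDistribution (π : Meas n) : Prop := ∑' x, π x = 1

def SigmaFinite (π : Meas n) : Prop := ∀ x, π x < ⊤

def FiniteMeas (π : Meas n) : Prop := ∑' x, π x < ⊤

def supp (π : Meas n) : Set (Fin n → ℤ) := {x | π x ≠ 0}

/-- `π` is within `Γ` if its support is nonempty and contained in `Γ`. -/
def Within (π : Meas n) (Γ : Set (Fin n → ℤ)) : Prop := (supp π).Nonempty ∧ supp π ⊆ Γ

/-- `π` is a stationary measure. -/
def Stationary (Λ : StochKin G) (π : Meas n) : Prop :=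
  ∀ x : Fin n → ℤ,
    π x * ∑ r ∈ G.R, (Λ.rate r x : ℝ≥0∞) =
    ∑ r ∈ G.R, π (x + toZ r.1 - toZ r.2) * (Λ.rate r (x + toZ r.1 - toZ r.2) : ℝ≥0∞)

def StationaryDistribution (Λ : StochKin G) (π : Meas n) : Prop :=
  IsDistribution π ∧ Stationary Λ π

/-- `π` is a reaction balanced measure. -/
def ReactionBalancedM (Λ : StochKin G) (π : Meas n) : Prop :=
  ∀ x : Fin n → ℤ, ∀ y ∈ G.C, ∀ y' ∈ G.C,
    π x * (Λ.rate (y, y') x : ℝ≥0∞) =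
    π (x + toZ y' - toZ y) * (Λ.rate (y', y) (x + toZ y' - toZ y) : ℝ≥0∞)

/-- `π` is a complex balanced measure. -/
def ComplexBalancedM (Λ : StochKin G) (π : Meas n) : Prop :=
  ∀ x : Fin n → ℤ, ∀ y ∈ G.C,
    π x * ∑ y' ∈ G.C, (Λ.rate (y, y') x : ℝ≥0∞) =
    ∑ y' ∈ G.C, π (x + toZ y' - toZ y) * (Λ.rate (y', y) (x + toZ y' - toZ y) : ℝ≥0∞)

/-- `π` is a reaction vector balanced measure (detailed balanced as a Markov chain). -/
def RVBalancedM (Λ : StochKin G) (π : Meas n) : Prop :=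
  ∀ x : Fin n → ℤ, ∀ ξ : Fin n → ℤ,
    π x * ∑ r ∈ G.R.filter (fun r => toZ r.2 - toZ r.1 = ξ), (Λ.rate r x : ℝ≥0∞) =
    π (x + ξ) * ∑ r ∈ G.R.filter (fun r => toZ r.2 - toZ r.1 = -ξ), (Λ.rate r (x + ξ) : ℝ≥0∞)

/-- `π` is a cycle balanced measure. -/
def CycleBalancedM (Λ : StochKin G) (π : Meas n) : Prop :=
  ∀ x : Fin n → ℤ, ∀ j : ℕ, 3 ≤ j → ∀ ys : ℕ → Cplx n,
    (∀ i < j, ys i ∈ G.C) →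
    (∀ i < j, ∀ k < j, ys i = ys k → i = k) →
    ∏ i ∈ Finset.range j,
      π (x + toZ (ys i)) * (Λ.rate (ys i, ys ((i + 1) % j)) (x + toZ (ys i)) : ℝ≥0∞) =
    ∏ i ∈ Finset.range j,
      π (x + toZ (ys ((i + 1) % j))) *
        (Λ.rate (ys ((i + 1) % j), ys i) (x + toZ (ys ((i + 1) % j))) : ℝ≥0∞)

/-- One step of the dynamics: from `u`, an active reaction takes `u` to `u + y' - y`. -/
def Step (Λ : StochKin G) (u v : Fin n → ℤ) : Prop :=
  ∃ r ∈ G.R, 0 < Λ.rate r u ∧ v = u + toZ r.2 - toZ r.1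

/-- `u` is accessible from `x`. -/
def Accessible (Λ : StochKin G) (x u : Fin n → ℤ) : Prop :=
  Relation.ReflTransGen (Step Λ) x u

/-- `Γ` is an irreducible component. -/
def IrredComp (Λ : StochKin G) (Γ : Set (Fin n → ℤ)) : Prop :=
  Γ.Nonempty ∧ ∀ x ∈ Γ, ∀ u, Accessible Λ x u ↔ u ∈ Γ

/-- `Γ` is active: every reaction is active at some state of `Γ`. -/
def ActiveSet (Λ : StochKin G) (Γ : Set (Fin n → ℤ)) : Prop :=
  ∀ r ∈ G.R, ∃ x ∈ Γ, 0 < Λ.rate r x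

/-- The active subnetwork of `(G,Λ)` in `Γ`. -/
def activeSubnet (Λ : StochKin G) (Γ : Set (Fin n → ℤ)) : Network n :=
  ⟨G.R.filter (fun r => ∃ x ∈ Γ, 0 < Λ.rate r x),
   fun r hr => G.ne_src_tgt r (Finset.mem_filter.mp hr).1⟩

/-- `(G,Λ)` is a reaction balanced stochastic reaction system. -/
def SysReactionBalanced (Λ : StochKin G) : Prop :=
  (∃ π Γ, StationaryDistribution Λ π ∧ IrredComp Λ Γ ∧ ActiveSet Λ Γ ∧ Within π Γ) ∧
  ∀ π Γ, StationaryDistribution Λ π → IrredComp Λ Γ → ActiveSet Λ Γ → Within π Γ →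
    ReactionBalancedM Λ π

/-- `(G,Λ)` is a complex balanced stochastic reaction system. -/
def SysComplexBalanced (Λ : StochKin G) : Prop :=
  (∃ π Γ, StationaryDistribution Λ π ∧ IrredComp Λ Γ ∧ ActiveSet Λ Γ ∧ Within π Γ) ∧
  ∀ π Γ, StationaryDistribution Λ π → IrredComp Λ Γ → ActiveSet Λ Γ → Within π Γ →
    ComplexBalancedM Λ π

/-- `(G,Λ)` is a reaction vector balanced stochastic reaction system. -/
def SysRVBalanced (Λ : StochKin G) : Prop :=
  (∃ π Γ, StationaryDistribution Λ π ∧ IrredComp Λ Γ ∧ ActiveSet Λ Γ ∧ Within π Γ) ∧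
  ∀ π Γ, StationaryDistribution Λ π → IrredComp Λ Γ → ActiveSet Λ Γ → Within π Γ →
    RVBalancedM Λ π

/-- `(G,Λ)` is a cycle balanced stochastic reaction system. -/
def SysCycleBalanced (Λ : StochKin G) : Prop :=
  (∃ π Γ, StationaryDistribution Λ π ∧ IrredComp Λ Γ ∧ ActiveSet Λ Γ ∧ Within π Γ) ∧
  ∀ π Γ, StationaryDistribution Λ π → IrredComp Λ Γ → ActiveSet Λ Γ → Within π Γ →
    CycleBalancedM Λ π

end Stoch

/-- A mass action system: a network together with positive rate constants
(set to `0` off the reaction set, per the usual convention). -/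
structure MASystem (n : ℕ) where
  G : Network n
  κ : Reaction n → ℝ
  pos : ∀ r ∈ G.R, 0 < κ r
  zero_off : ∀ r, r ∉ G.R → κ r = 0

/-- The deterministic mass action kinetics: `λ_{y→y'}(z) = 1_{{z ≥ 0}} κ_{y→y'} z^y`. -/
def MASystem.detKin {n : ℕ} (S : MASystem n) : DetKin S.G where
  rate r z := (if ∀ i, 0 ≤ z i then (1 : ℝ) else 0) * S.κ r * ∏ i, z i ^ (r.1 i)
  nonneg r z := by
    have hκ : 0 ≤ S.κ r := by
      by_cases h : r ∈ S.G.R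
      · exact le_of_lt (S.pos r h)
      · exact le_of_eq (S.zero_off r h).symm
    by_cases h : ∀ i, 0 ≤ z i
    · have hp : (0 : ℝ) ≤ ∏ i, z i ^ (r.1 i) :=
        Finset.prod_nonneg fun i _ => pow_nonneg (h i) _
      simp only [if_pos h, one_mul]
      exact mul_nonneg hκ hp
    · simp [if_neg h]
  zero_off r hr z := by simp [S.zero_off r hr]

/-- The stochastic mass action kinetics:
`λ_{y→y'}(x) = κ_{y→y'} · (x!/(x−y)!) · 1_{{x ≥ y}}`. -/
def MASystem.stochKin {n : ℕ} (S : MASystem n) : StochKin S.G where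
  rate r x :=
    if ∀ i, (r.1 i : ℤ) ≤ x i then
      (S.κ r).toNNReal *
        (((∏ i, ∏ j ∈ Finset.range (r.1 i), (x i - (j : ℤ))).toNat : ℝ≥0))
    else 0
  zero_off r hr x := by simp [S.zero_off r hr]

namespace Det

/-- `(G,K_D)` is a reaction balanced deterministic mass action system. -/
def SysReactionBalanced {n : ℕ} (S : MASystem n) : Prop :=
  (∃ c : Fin n → ℝ, (∀ i, 0 < c i) ∧ IsEquilibrium S.detKin c) ∧
  ∀ c : Fin n → ℝ, (∀ i, 0 < c i) → IsEquilibrium S.detKin c → ReactionBalanced S.detKin c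

/-- `(G,K_D)` is a complex balanced deterministic mass action system. -/
def SysComplexBalanced {n : ℕ} (S : MASystem n) : Prop :=
  (∃ c : Fin n → ℝ, (∀ i, 0 < c i) ∧ IsEquilibrium S.detKin c) ∧
  ∀ c : Fin n → ℝ, (∀ i, 0 < c i) → IsEquilibrium S.detKin c → ComplexBalanced S.detKin c

/-- `(G,K_D)` is a cycle balanced deterministic mass action system. -/
def SysCycleBalanced {n : ℕ} (S : MASystem n) : Prop :=
  (∃ c : Fin n → ℝ, (∀ i, 0 < c i) ∧ IsEquilibrium S.detKin c) ∧
  ∀ c : Fin n → ℝ, (∀ i, 0 < c i) → IsEquilibrium S.detKin c → CycleBalanced S.detKin c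

end Det

end CRN

open CRN

/-!
Reaction balance at `c > 0` makes the network reversible, and with `ν = log (z / c)` the rate of
`y → y'` at `z ≥ 0` is `λ_{y→y'}(c) · exp ⟨y, ν⟩` whenever `y` lies in the support of `z`, with
`λ_{y→y'}(c) = λ_{y'→y}(c)`. Pairing the equilibrium equation with `ν` gives
`∑ (λ_{y→y'}(z) - λ_{y'→y}(z)) ⟨y - y', ν⟩ = 0`, where every term is nonnegative since `exp` is
monotone; so all pairs of rates agree. (At the boundary one first pairs with the indicator of the
zero coordinates: an active reaction never leaves the support.) Hence a positive `z` is an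
equilibrium iff `log (z / c) ⊥ S`, and two such points in one class coincide because
`(x - y)(log x - log y) > 0` for `x ≠ y`. For existence, the free energy
`∑ c_i klFun (z_i / c_i)` attains its minimum on the class; the minimizer is positive since
`t log t` wins near the boundary, and there its gradient `log (z / c)` is orthogonal to `S`.
-/

open Finset Real InformationTheory Filter Topology

theorem StrictMono.sub_mul_sub_pos {R : Type*} [Ring R] [LinearOrder R] [IsStrictOrderedRing R]
    {f : R → R} (hf : StrictMono f) {a b : R} (hab : a ≠ b) : 0 < (f a - f b) * (a - b) := by
  rcases hab.lt_or_gt with h | h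
  · exact mul_pos_of_neg_of_neg (sub_neg.2 (hf h)) (sub_neg.2 h)
  · exact mul_pos (sub_pos.2 (hf h)) (sub_pos.2 h)

theorem StrictMono.sub_mul_sub_nonneg {R : Type*} [Ring R] [LinearOrder R] [IsStrictOrderedRing R]
    {f : R → R} (hf : StrictMono f) (a b : R) : 0 ≤ (f a - f b) * (a - b) := by
  rcases eq_or_ne a b with rfl | hab
  · simp
  · exact (hf.sub_mul_sub_pos hab).le

theorem Real.prod_pow_eq_prod_pow_mul_exp {ι : Type*} [Fintype ι] {c z : ι → ℝ}
    (hc : ∀ i, 0 < c i) (y : ι → ℕ) (hy : ∀ i, y i ≠ 0 → 0 < z i) :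
    ∏ i, z i ^ y i = (∏ i, c i ^ y i) * exp (∑ i, (y i : ℝ) * log (z i / c i)) := by
  rw [exp_sum, ← prod_mul_distrib]
  refine prod_congr rfl fun i _ => ?_
  rcases eq_or_ne (y i) 0 with h | h
  · simp [h]
  · rw [exp_nat_mul, exp_log (div_pos (hy i h) (hc i)), ← mul_pow, mul_div_cancel₀ _ (hc i).ne']

theorem Real.sub_mul_log_sub_log_pos {x y : ℝ} (hx : 0 < x) (hy : 0 < y) (hxy : x ≠ y) :
    0 < (x - y) * (log x - log y) := by
  simpa [exp_log hx, exp_log hy] using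
    exp_strictMono.sub_mul_sub_pos fun h => hxy (log_injOn_pos hx hy h)

namespace CRN

section FreeEnergy

variable {ι : Type*} [Fintype ι]

def freeEnergy (c z : ι → ℝ) : ℝ := ∑ i, c i * klFun (z i / c i)

theorem continuous_freeEnergy (c : ι → ℝ) : Continuous (freeEnergy c) := by
  unfold freeEnergy; fun_prop

theorem le_klFun_add_exp_one {y : ℝ} (hy : 0 ≤ y) : y ≤ klFun y + exp 1 := by
  rcases hy.eq_or_lt with rfl | hy
  · rw [klFun_zero]; positivity
  -- `klFun` lies above its tangent line `y ↦ y + 1 - e` at `e`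
  have hlog : 1 - exp 1 / y ≤ log y - 1 := by
    rw [← log_exp 1, ← log_div hy.ne' (exp_pos 1).ne', log_exp, ← inv_div]
    exact one_sub_inv_le_log_of_pos (div_pos hy (exp_pos 1))
  have : exp 1 / y * y = exp 1 := div_mul_cancel₀ _ hy.ne'
  rw [klFun_apply]
  nlinarith [exp_pos 1]

theorem le_freeEnergy_add {c z : ι → ℝ} (hc : ∀ i, 0 < c i) (hz : ∀ i, 0 ≤ z i) (j : ι) :
    z j ≤ freeEnergy c z + c j * exp 1 := by
  have hterm : c j * klFun (z j / c j) ≤ freeEnergy c z :=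
    single_le_sum (f := fun i => c i * klFun (z i / c i))
      (fun i _ => mul_nonneg (hc i).le (klFun_nonneg (div_nonneg (hz i) (hc i).le))) (mem_univ j)
  have hj := mul_le_mul_of_nonneg_left (le_klFun_add_exp_one (div_nonneg (hz j) (hc j).le))
    (hc j).le
  rw [mul_div_cancel₀ _ (hc j).ne', mul_add] at hj
  linarith

theorem exists_isMinOn_freeEnergy {c : ι → ℝ} (hc : ∀ i, 0 < c i) {K : Set (ι → ℝ)}
    (hK : IsClosed K) (hK₀ : ∀ z ∈ K, ∀ i, 0 ≤ z i) {z₀ : ι → ℝ} (hz₀ : z₀ ∈ K) :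
    ∃ z ∈ K, IsMinOn (freeEnergy c) K z := by
  set L := K ∩ freeEnergy c ⁻¹' Set.Iic (freeEnergy c z₀)
  have hL : IsCompact L := by
    refine (isCompact_Icc (a := 0) (b := fun j => freeEnergy c z₀ + c j * exp 1))
      |>.of_isClosed_subset (hK.inter (isClosed_Iic.preimage (continuous_freeEnergy c))) ?_
    rintro z ⟨hzK, hzL⟩
    exact ⟨hK₀ z hzK, fun j => (le_freeEnergy_add hc (hK₀ z hzK) j).trans (by simpa using hzL)⟩
  obtain ⟨z, ⟨hzK, -⟩, hmin⟩ :=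
    hL.exists_isMinOn ⟨z₀, hz₀, le_refl (freeEnergy c z₀)⟩ (continuous_freeEnergy c).continuousOn
  refine ⟨z, hzK, fun w hw => ?_⟩
  by_cases hw₀ : freeEnergy c w ≤ freeEnergy c z₀
  · exact hmin ⟨hw, hw₀⟩
  · exact (hmin ⟨hz₀, le_refl (freeEnergy c z₀)⟩).trans (le_of_not_ge hw₀)

theorem mul_klFun_div_add_mul_sub_le {c a b t : ℝ} (hc : 0 < c) (ha : 0 ≤ a) (hb : 0 < b)
    (ht₀ : 0 < t) (ht₁ : t ≤ 1) :
    c * klFun ((a + t * (b - a)) / c) ≤ (1 - t) * (c * klFun (a / c)) + t * (c * klFun (b / c)) +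
      t * log t * (if a = 0 then b else 0) := by
  rcases ha.eq_or_lt with rfl | ha
  · have hlog : log (t * b / c) = log t + log (b / c) := by
      rw [mul_div_assoc, log_mul ht₀.ne' (div_pos hb hc).ne']
    refine le_of_eq ?_
    simp only [if_true, zero_add, sub_zero, zero_div, klFun_apply, hlog]
    field_simp
    ring
  · have hconv := convexOn_klFun.2 (Set.mem_Ici.2 (div_nonneg ha.le hc.le))
      (Set.mem_Ici.2 (div_nonneg hb.le hc.le)) (sub_nonneg.2 ht₁) ht₀.le (sub_add_cancel 1 t)
    simp only [smul_eq_mul] at hconv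
    have harg : (a + t * (b - a)) / c = (1 - t) * (a / c) + t * (b / c) := by
      field_simp; ring
    rw [harg, if_neg ha.ne', mul_zero, add_zero]
    nlinarith [mul_le_mul_of_nonneg_left hconv hc.le]

theorem freeEnergy_add_smul_sub_le {c zs z₀ : ι → ℝ} (hc : ∀ i, 0 < c i)
    (hzs : ∀ i, 0 ≤ zs i) (hz₀ : ∀ i, 0 < z₀ i) {t : ℝ} (ht₀ : 0 < t) (ht₁ : t ≤ 1) :
    freeEnergy c (zs + t • (z₀ - zs)) ≤ (1 - t) * freeEnergy c zs + t * freeEnergy c z₀ +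
      t * log t * ∑ i, if zs i = 0 then z₀ i else 0 := by
  simp only [freeEnergy, mul_sum, ← sum_add_distrib]
  exact sum_le_sum fun i _ => mul_klFun_div_add_mul_sub_le (hc i) (hzs i) (hz₀ i) ht₀ ht₁

theorem pos_of_isMinOn_freeEnergy {c : ι → ℝ} (hc : ∀ i, 0 < c i) {K : Set (ι → ℝ)}
    (hK : Convex ℝ K) {z₀ zs : ι → ℝ} (hz₀ : z₀ ∈ K) (hz₀p : ∀ i, 0 < z₀ i) (hzs : zs ∈ K)
    (hzs₀ : ∀ i, 0 ≤ zs i) (hmin : IsMinOn (freeEnergy c) K zs) : ∀ i, 0 < zs i := by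
  by_contra hneg
  push Not at hneg
  obtain ⟨j, hj⟩ := hneg
  set D := ∑ i, if zs i = 0 then z₀ i else 0
  have hD : 0 < D := by
    refine sum_pos' (fun i _ => ?_) ⟨j, mem_univ j, ?_⟩
    · split_ifs
      exacts [(hz₀p i).le, le_rfl]
    · simp [le_antisymm hj (hzs₀ j), hz₀p j]
  set A := freeEnergy c z₀ - freeEnergy c zs
  have hA : 0 ≤ A := sub_nonneg.2 (hmin hz₀)
  -- a step `t` towards `z₀` changes the free energy by at most `t (A + D log t)`
  set t := exp (-(A + 1) / D)
  have ht₀ : 0 < t := exp_pos _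
  have ht₁ : t ≤ 1 := exp_le_one_iff.2 (div_nonpos_of_nonpos_of_nonneg (by linarith) hD.le)
  have hlog : t * log t * D = -(t * (A + 1)) := by
    rw [log_exp]; field_simp
  have hle := freeEnergy_add_smul_sub_le hc hzs₀ hz₀p ht₀ ht₁
  have hge : freeEnergy c zs ≤ freeEnergy c (zs + t • (z₀ - zs)) :=
    hmin (hK.add_smul_sub_mem hzs hz₀ ⟨ht₀.le, ht₁⟩)
  have hsplit : (1 - t) * freeEnergy c zs + t * freeEnergy c z₀ = freeEnergy c zs + t * A := by
    ring
  linarith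

theorem hasDerivAt_freeEnergy_add_smul {c z : ι → ℝ} (hc : ∀ i, 0 < c i) (hz : ∀ i, 0 < z i)
    (s : ι → ℝ) :
    HasDerivAt (fun t : ℝ => freeEnergy c (z + t • s)) (s ⬝ᵥ fun i => log (z i / c i)) 0 := by
  simp only [freeEnergy, dotProduct, Pi.add_apply, Pi.smul_apply, smul_eq_mul]
  refine HasDerivAt.fun_sum fun i _ => ?_
  have hline : HasDerivAt (fun t : ℝ => (z i + t * s i) / c i) (s i / c i) 0 :=
    (((hasDerivAt_id (0 : ℝ)).mul_const (s i)).const_add (z i)).div_const (c i) |>.congr_deriv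
      (by simp)
  have hkl : HasDerivAt klFun (log (z i / c i)) ((z i + 0 * s i) / c i) := by
    simpa using hasDerivAt_klFun (div_pos (hz i) (hc i)).ne'
  refine ((hkl.comp 0 hline).const_mul (c i)).congr_deriv ?_
  field_simp [(hc i).ne']

theorem dotProduct_log_div_eq_zero_of_isMinOn {c zs : ι → ℝ} (hc : ∀ i, 0 < c i)
    (hzs : ∀ i, 0 < zs i) {K : Set (ι → ℝ)} (hmin : IsMinOn (freeEnergy c) K zs) {s : ι → ℝ}
    (hs : ∀ᶠ t in 𝓝 (0 : ℝ), zs + t • s ∈ K) : s ⬝ᵥ (fun i => log (zs i / c i)) = 0 := by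
  refine IsLocalMin.hasDerivAt_eq_zero ?_ (hasDerivAt_freeEnergy_add_smul hc hzs s)
  filter_upwards [hs] with t ht
  simpa using hmin ht

end FreeEnergy

variable {n : ℕ}

theorem Network.mem_C_fst {G : Network n} {r : Reaction n} (hr : r ∈ G.R) : r.1 ∈ G.C :=
  mem_union_left _ (mem_image_of_mem _ hr)

theorem Network.mem_C_snd {G : Network n} {r : Reaction n} (hr : r ∈ G.R) : r.2 ∈ G.C :=
  mem_union_right _ (mem_image_of_mem _ hr)

theorem Network.Reversible.sum_swap {G : Network n} (hG : G.Reversible) {M : Type*}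
    [AddCommMonoid M] (f : Reaction n → M) : ∑ r ∈ G.R, f r.swap = ∑ r ∈ G.R, f r :=
  sum_nbij' Prod.swap Prod.swap hG hG (fun r _ => r.swap_swap) (fun r _ => r.swap_swap)
    (fun _ _ => rfl)

theorem stoichSubspace_dotProduct_eq_zero_iff {G : Network n} {q : Fin n → ℝ} :
    (∀ s ∈ stoichSubspace G, s ⬝ᵥ q = 0) ↔ ∀ r ∈ G.R, (toR r.2 - toR r.1) ⬝ᵥ q = 0 := by
  refine ⟨fun h r hr => h _ (Submodule.subset_span ⟨r, hr, rfl⟩), fun h s hs => ?_⟩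
  induction hs using Submodule.span_induction with
  | mem s hs => obtain ⟨r, hr, rfl⟩ := hs; exact h r hr
  | zero => exact zero_dotProduct q
  | add s t _ _ hs ht => rw [add_dotProduct, hs, ht, add_zero]
  | smul a s _ hs => rw [smul_dotProduct, hs, smul_zero]

theorem isClosed_compatClass (G : Network n) (v : Fin n → ℝ) : IsClosed (compatClass G v) :=
  ((Submodule.closed_of_finiteDimensional (stoichSubspace G)).preimage
    (continuous_id.sub continuous_const)).inter (isClosed_le continuous_const continuous_id)

theorem convex_compatClass (G : Network n) (v : Fin n → ℝ) : Convex ℝ (compatClass G v) := by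
  rintro x ⟨hxS, hx⟩ y ⟨hyS, hy⟩ a b ha hb hab
  refine ⟨?_, fun i => add_nonneg (mul_nonneg ha (hx i)) (mul_nonneg hb (hy i))⟩
  have : a • x + b • y - v = a • (x - v) + b • (y - v) := by
    calc a • x + b • y - v = a • x + b • y - (a + b) • v := by rw [hab, one_smul]
      _ = a • (x - v) + b • (y - v) := by module
  rw [this]
  exact add_mem (Submodule.smul_mem _ a hxS) (Submodule.smul_mem _ b hyS)

theorem eventually_add_smul_mem_compatClass {G : Network n} {v z s : Fin n → ℝ}
    (hz : z ∈ compatClass G v) (hzp : ∀ i, 0 < z i) (hs : s ∈ stoichSubspace G) :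
    ∀ᶠ t in 𝓝 (0 : ℝ), z + t • s ∈ compatClass G v := by
  have hpos : ∀ i, ∀ᶠ t in 𝓝 (0 : ℝ), 0 < z i + t * s i := fun i =>
    ((continuous_const.add (continuous_id.mul continuous_const)).tendsto 0).eventually_const_lt
      (by simpa using hzp i)
  filter_upwards [eventually_all.2 hpos] with t ht
  refine ⟨?_, fun i => (ht i).le⟩
  rw [add_sub_right_comm]
  exact add_mem hz.1 (Submodule.smul_mem _ t hs)

namespace Det

variable {G : Network n} {Λ : DetKin G}

theorem IsEquilibrium.sum_rate_mul_dotProduct {z : Fin n → ℝ} (h : IsEquilibrium Λ z)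
    (q : Fin n → ℝ) : ∑ r ∈ G.R, Λ.rate r z * ((toR r.2 - toR r.1) ⬝ᵥ q) = 0 := by
  simpa [sum_dotProduct, smul_dotProduct] using congrArg (· ⬝ᵥ q) h

theorem isEquilibrium_of_rate_swap (hG : G.Reversible) {z : Fin n → ℝ}
    (h : ∀ r ∈ G.R, Λ.rate r z = Λ.rate r.swap z) : IsEquilibrium Λ z := by
  have key : ∑ r ∈ G.R, Λ.rate r.swap z • (toR r.swap.2 - toR r.swap.1) =
      -∑ r ∈ G.R, Λ.rate r z • (toR r.2 - toR r.1) := by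
    rw [← sum_neg_distrib]
    refine sum_congr rfl fun r hr => ?_
    rw [Prod.fst_swap, Prod.snd_swap, ← h r hr, ← smul_neg, neg_sub]
  rw [hG.sum_swap (fun r => Λ.rate r z • (toR r.2 - toR r.1))] at key
  exact self_eq_neg.1 key

theorem reactionBalanced_iff (hG : G.Reversible) {z : Fin n → ℝ} :
    ReactionBalanced Λ z ↔ ∀ r ∈ G.R, Λ.rate r z = Λ.rate r.swap z := by
  refine ⟨fun h r hr => h _ (G.mem_C_fst hr) _ (G.mem_C_snd hr), fun h y _ y' _ => ?_⟩
  by_cases hyy' : (y, y') ∈ G.R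
  · exact h _ hyy'
  · have hy'y : (y', y) ∉ G.R := fun h' => hyy' (hG _ h')
    rw [Λ.zero_off _ hyy', Λ.zero_off _ hy'y]

end Det

namespace MASystem

variable (S : MASystem n)

theorem detKin_rate_of_nonneg {z : Fin n → ℝ} (hz : ∀ i, 0 ≤ z i) (r : Reaction n) :
    S.detKin.rate r z = S.κ r * ∏ i, z i ^ r.1 i := by
  simp [detKin, hz]

theorem detKin_rate_of_not_nonneg {z : Fin n → ℝ} (hz : ¬ ∀ i, 0 ≤ z i) (r : Reaction n) :
    S.detKin.rate r z = 0 := by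
  simp [detKin, hz]

theorem detKin_rate_pos_iff {z : Fin n → ℝ} (hz : ∀ i, 0 ≤ z i) {r : Reaction n} :
    0 < S.detKin.rate r z ↔ r ∈ S.G.R ∧ ∀ i, r.1 i ≠ 0 → 0 < z i := by
  rw [S.detKin_rate_of_nonneg hz]
  constructor
  · intro h
    refine ⟨by_contra fun hr => by simp [S.zero_off r hr] at h, fun i hi => ?_⟩
    have hprod : ∏ i, z i ^ r.1 i ≠ 0 := right_ne_zero_of_mul h.ne'
    exact (hz i).lt_of_ne' fun hzi => hprod (prod_eq_zero (mem_univ i) (by simp [hzi, hi]))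
  · rintro ⟨hr, hsupp⟩
    refine mul_pos (S.pos r hr) (prod_pos fun i _ => ?_)
    rcases eq_or_ne (r.1 i) 0 with h | h
    · simp [h]
    · exact pow_pos (hsupp i h) _

theorem detKin_rate_eq_mul_exp {c z : Fin n → ℝ} (hc : ∀ i, 0 < c i) (hz : ∀ i, 0 ≤ z i)
    {r : Reaction n} (hr : ∀ i, r.1 i ≠ 0 → 0 < z i) :
    S.detKin.rate r z = S.detKin.rate r c * exp (toR r.1 ⬝ᵥ fun i => log (z i / c i)) := by
  rw [S.detKin_rate_of_nonneg hz, S.detKin_rate_of_nonneg (fun i => (hc i).le),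
    prod_pow_eq_prod_pow_mul_exp hc _ hr, mul_assoc]
  rfl

theorem target_pos_of_isEquilibrium {z : Fin n → ℝ} (hz : ∀ i, 0 ≤ z i)
    (heq : Det.IsEquilibrium S.detKin z) {r : Reaction n} (hr : 0 < S.detKin.rate r z) :
    ∀ i, r.2 i ≠ 0 → 0 < z i := by
  set q : Fin n → ℝ := fun i => if 0 < z i then 0 else 1
  have hq : ∀ i, 0 ≤ q i := fun i => by dsimp only [q]; split_ifs <;> norm_num
  have hsource : ∀ r', S.detKin.rate r' z * ((toR r'.2 - toR r'.1) ⬝ᵥ q) =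
      S.detKin.rate r' z * (toR r'.2 ⬝ᵥ q) := by
    intro r'
    rcases (S.detKin.nonneg r' z).eq_or_lt with h | h
    · rw [← h, zero_mul, zero_mul]
    · have hsupp := ((S.detKin_rate_pos_iff hz).1 h).2
      have h0 : toR r'.1 ⬝ᵥ q = 0 := sum_eq_zero fun i _ => by
        by_cases hzi : 0 < z i
        · simp [q, hzi]
        · simp [toR, not_imp_comm.1 (hsupp i) hzi]
      rw [sub_dotProduct, h0, sub_zero]
  have htarget := heq.sum_rate_mul_dotProduct q
  simp_rw [hsource] at htarget
  have hnonneg : ∀ r' ∈ S.G.R, 0 ≤ S.detKin.rate r' z * (toR r'.2 ⬝ᵥ q) := fun r' _ =>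
    mul_nonneg (S.detKin.nonneg r' z) (sum_nonneg fun i _ => mul_nonneg (Nat.cast_nonneg _) (hq i))
  have hr0 := (sum_eq_zero_iff_of_nonneg hnonneg).1 htarget r ((S.detKin_rate_pos_iff hz).1 hr).1
  have hdot : toR r.2 ⬝ᵥ q = 0 := (mul_eq_zero.1 hr0).resolve_left hr.ne'
  intro i hi
  by_contra hzi
  have := (sum_eq_zero_iff_of_nonneg fun j _ => mul_nonneg (Nat.cast_nonneg _) (hq j)).1 hdot i
    (mem_univ i)
  simp [q, hzi, hi] at this

variable {S} {c : Fin n → ℝ}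

theorem reversible_of_reactionBalanced (hc : ∀ i, 0 < c i) (hrb : Det.ReactionBalanced S.detKin c) :
    S.G.Reversible := by
  intro r hr
  by_contra hrev
  have hbal : S.detKin.rate r c = S.detKin.rate (r.2, r.1) c :=
    hrb _ (S.G.mem_C_fst hr) _ (S.G.mem_C_snd hr)
  rw [S.detKin.zero_off _ hrev] at hbal
  exact ((S.detKin_rate_pos_iff fun i => (hc i).le).2 ⟨hr, fun i _ => hc i⟩).ne' hbal

theorem detKin_rate_swap_eq_mul_exp (hc : ∀ i, 0 < c i) (hrb : Det.ReactionBalanced S.detKin c)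
    {z : Fin n → ℝ} (hz : ∀ i, 0 ≤ z i) {r : Reaction n}
    (hr : r ∈ S.G.R) (htarget : ∀ i, r.2 i ≠ 0 → 0 < z i) :
    S.detKin.rate r.swap z = S.detKin.rate r c * exp (toR r.2 ⬝ᵥ fun i => log (z i / c i)) := by
  rw [S.detKin_rate_eq_mul_exp hc hz (r := r.swap) htarget]
  congr 1
  exact (hrb _ (S.G.mem_C_fst hr) _ (S.G.mem_C_snd hr)).symm

/-- `ρ = λ_r(c)` for an active pair and `ρ = 0` for an inactive one. -/
theorem exists_detKin_rate_eq_mul_exp (hc : ∀ i, 0 < c i)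
    (hrb : Det.ReactionBalanced S.detKin c) {z : Fin n → ℝ} (hz : ∀ i, 0 ≤ z i)
    (heq : Det.IsEquilibrium S.detKin z) {r : Reaction n} (hr : r ∈ S.G.R) :
    ∃ ρ, 0 ≤ ρ ∧ S.detKin.rate r z = ρ * exp (toR r.1 ⬝ᵥ fun i => log (z i / c i)) ∧
      S.detKin.rate r.swap z = ρ * exp (toR r.2 ⬝ᵥ fun i => log (z i / c i)) := by
  rcases (S.detKin.nonneg r z).eq_or_lt with hzero | hpos
  · refine ⟨0, le_rfl, by simp [← hzero], ?_⟩
    rw [zero_mul]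
    by_contra hswap
    have hswap := (S.detKin.nonneg r.swap z).lt_of_ne' hswap
    have hsource := S.target_pos_of_isEquilibrium hz heq hswap
    exact hzero.not_lt ((S.detKin_rate_pos_iff hz).2 ⟨hr, hsource⟩)
  · refine ⟨S.detKin.rate r c, S.detKin.nonneg r c,
      S.detKin_rate_eq_mul_exp hc hz ((S.detKin_rate_pos_iff hz).1 hpos).2,
      detKin_rate_swap_eq_mul_exp hc hrb hz hr (S.target_pos_of_isEquilibrium hz heq hpos)⟩

theorem detKin_rate_eq_rate_swap_of_isEquilibrium (hc : ∀ i, 0 < c i)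
    (hrb : Det.ReactionBalanced S.detKin c) {z : Fin n → ℝ} (hz : ∀ i, 0 ≤ z i)
    (heq : Det.IsEquilibrium S.detKin z) :
    ∀ r ∈ S.G.R, S.detKin.rate r z = S.detKin.rate r.swap z := by
  set ν : Fin n → ℝ := fun i => log (z i / c i)
  set g : Reaction n → ℝ := fun r =>
    (S.detKin.rate r z - S.detKin.rate r.swap z) * ((toR r.1 - toR r.2) ⬝ᵥ ν)
  have hg : ∀ r ∈ S.G.R, 0 ≤ g r ∧ (g r = 0 → S.detKin.rate r z = S.detKin.rate r.swap z) := by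
    intro r hr
    obtain ⟨ρ, hρ, h₁, h₂⟩ := exists_detKin_rate_eq_mul_exp hc hrb hz heq hr
    have hgr : g r = ρ * ((exp (toR r.1 ⬝ᵥ ν) - exp (toR r.2 ⬝ᵥ ν)) *
        (toR r.1 ⬝ᵥ ν - toR r.2 ⬝ᵥ ν)) := by
      simp only [g, h₁, h₂, sub_dotProduct]; ring
    refine ⟨hgr ▸ mul_nonneg hρ (exp_strictMono.sub_mul_sub_nonneg _ _), fun h0 => ?_⟩
    rw [h₁, h₂]
    rcases mul_eq_zero.1 (hgr ▸ h0) with hρ0 | hpair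
    · rw [hρ0, zero_mul, zero_mul]
    · by_contra hne
      refine (exp_strictMono.sub_mul_sub_pos fun ha => hne ?_).ne' hpair
      rw [ha]
  have hsum : ∑ r ∈ S.G.R, g r = 0 := by
    have h₀ := heq.sum_rate_mul_dotProduct ν
    have h₁ : ∑ r ∈ S.G.R, S.detKin.rate r.swap z * ((toR r.1 - toR r.2) ⬝ᵥ ν) = 0 := by
      rw [← h₀, ← (reversible_of_reactionBalanced hc hrb).sum_swap]
      rfl
    simp only [g, sub_mul, sum_sub_distrib, h₁, sub_zero]
    rw [← neg_zero, ← h₀, ← sum_neg_distrib]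
    refine sum_congr rfl fun r _ => ?_
    rw [← mul_neg, ← neg_dotProduct, neg_sub]
  intro r hr
  exact (hg r hr).2 ((sum_eq_zero_iff_of_nonneg fun r hr => (hg r hr).1).1 hsum r hr)

theorem reactionBalanced_of_isEquilibrium (hc : ∀ i, 0 < c i)
    (hrb : Det.ReactionBalanced S.detKin c) {z : Fin n → ℝ} (heq : Det.IsEquilibrium S.detKin z) :
    Det.ReactionBalanced S.detKin z := by
  by_cases hz : ∀ i, 0 ≤ z i
  · exact (Det.reactionBalanced_iff (reversible_of_reactionBalanced hc hrb)).2
      (detKin_rate_eq_rate_swap_of_isEquilibrium hc hrb hz heq)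
  · intro y _ y' _
    rw [S.detKin_rate_of_not_nonneg hz, S.detKin_rate_of_not_nonneg hz]

theorem isEquilibrium_iff_dotProduct_log_div_eq_zero (hc : ∀ i, 0 < c i)
    (hrb : Det.ReactionBalanced S.detKin c) {z : Fin n → ℝ} (hz : ∀ i, 0 < z i) :
    Det.IsEquilibrium S.detKin z ↔
      ∀ s ∈ stoichSubspace S.G, s ⬝ᵥ (fun i => log (z i / c i)) = 0 := by
  have hz' : ∀ i, 0 ≤ z i := fun i => (hz i).le
  have hrate : ∀ r ∈ S.G.R, (S.detKin.rate r z = S.detKin.rate r.swap z ↔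
      (toR r.2 - toR r.1) ⬝ᵥ (fun i => log (z i / c i)) = 0) := by
    intro r hr
    have hρ := (S.detKin_rate_pos_iff fun i => (hc i).le).2 ⟨hr, fun i _ => hc i⟩
    rw [S.detKin_rate_eq_mul_exp hc hz' fun i _ => hz i,
      detKin_rate_swap_eq_mul_exp hc hrb hz' hr fun i _ => hz i, mul_right_inj' hρ.ne',
      exp_eq_exp, sub_dotProduct, sub_eq_zero, eq_comm]
  rw [stoichSubspace_dotProduct_eq_zero_iff]
  constructor
  · exact fun heq r hr =>
      (hrate r hr).1 (detKin_rate_eq_rate_swap_of_isEquilibrium hc hrb hz' heq r hr)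
  · exact fun h => Det.isEquilibrium_of_rate_swap (reversible_of_reactionBalanced hc hrb)
      fun r hr => (hrate r hr).2 (h r hr)

theorem eq_of_isEquilibrium_of_mem_compatClass (hc : ∀ i, 0 < c i)
    (hrb : Det.ReactionBalanced S.detKin c) {v z₁ z₂ : Fin n → ℝ} (h₁ : z₁ ∈ compatClass S.G v)
    (h₁p : ∀ i, 0 < z₁ i) (h₁e : Det.IsEquilibrium S.detKin z₁) (h₂ : z₂ ∈ compatClass S.G v)
    (h₂p : ∀ i, 0 < z₂ i) (h₂e : Det.IsEquilibrium S.detKin z₂) : z₁ = z₂ := by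
  have hsub : z₁ - z₂ ∈ stoichSubspace S.G := by simpa using sub_mem h₁.1 h₂.1
  have horth : ∑ i, (z₁ i - z₂ i) * (log (z₁ i) - log (z₂ i)) = 0 := by
    calc ∑ i, (z₁ i - z₂ i) * (log (z₁ i) - log (z₂ i))
        = (z₁ - z₂) ⬝ᵥ (fun i => log (z₁ i / c i)) - (z₁ - z₂) ⬝ᵥ (fun i => log (z₂ i / c i)) := by
          rw [← dotProduct_sub]
          refine sum_congr rfl fun i _ => ?_
          simp [log_div (h₁p i).ne' (hc i).ne', log_div (h₂p i).ne' (hc i).ne']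
      _ = 0 := by
          rw [(isEquilibrium_iff_dotProduct_log_div_eq_zero hc hrb h₁p).1 h₁e _ hsub,
            (isEquilibrium_iff_dotProduct_log_div_eq_zero hc hrb h₂p).1 h₂e _ hsub, sub_zero]
  have hnonneg : ∀ i ∈ univ, 0 ≤ (z₁ i - z₂ i) * (log (z₁ i) - log (z₂ i)) := fun i _ =>
    (eq_or_ne (z₁ i) (z₂ i)).elim (fun h => by simp [h])
      fun h => (sub_mul_log_sub_log_pos (h₁p i) (h₂p i) h).le
  funext i
  by_contra hne
  exact (sub_mul_log_sub_log_pos (h₁p i) (h₂p i) hne).ne'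
    ((sum_eq_zero_iff_of_nonneg hnonneg).1 horth i (mem_univ i))

theorem exists_pos_isEquilibrium_mem_compatClass (hc : ∀ i, 0 < c i)
    (hrb : Det.ReactionBalanced S.detKin c) {v z₀ : Fin n → ℝ} (hz₀ : z₀ ∈ compatClass S.G v)
    (hz₀p : ∀ i, 0 < z₀ i) :
    ∃ z ∈ compatClass S.G v, (∀ i, 0 < z i) ∧ Det.IsEquilibrium S.detKin z := by
  obtain ⟨z, hz, hmin⟩ :=
    exists_isMinOn_freeEnergy hc (isClosed_compatClass S.G v) (fun z hz => hz.2) hz₀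
  have hzp := pos_of_isMinOn_freeEnergy hc (convex_compatClass S.G v) hz₀ hz₀p hz hz.2 hmin
  refine ⟨z, hz, hzp, (isEquilibrium_iff_dotProduct_log_div_eq_zero hc hrb hzp).2 fun s hs => ?_⟩
  exact dotProduct_log_div_eq_zero_of_isMinOn hc hzp hmin
    (eventually_add_smul_mem_compatClass hz hzp hs)

end MASystem

end CRN

/-- If a deterministic mass action system has a positive reaction
balanced state, then every positive stoichiometric compatibility class contains exactly
one positive equilibrium, and every equilibrium is reaction balanced. -/
theorem mass_action_reaction_balanced_existence_uniqueness {n : ℕ} (S : MASystem n)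
    (c : Fin n → ℝ) (hc : ∀ i, 0 < c i) (hrb : Det.ReactionBalanced S.detKin c) :
    (∀ v : Fin n → ℝ, (∃ z ∈ compatClass S.G v, ∀ i, 0 < z i) →
      ∃! z : Fin n → ℝ,
        z ∈ compatClass S.G v ∧ (∀ i, 0 < z i) ∧ Det.IsEquilibrium S.detKin z) ∧
    ∀ z : Fin n → ℝ, Det.IsEquilibrium S.detKin z → Det.ReactionBalanced S.detKin z := by
  refine ⟨fun v ⟨z₀, hz₀, hz₀p⟩ => ?_,
    fun z hz => MASystem.reactionBalanced_of_isEquilibrium hc hrb hz⟩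
  obtain ⟨z, hz, hzp, hze⟩ := MASystem.exists_pos_isEquilibrium_mem_compatClass hc hrb hz₀ hz₀p
  exact ⟨z, ⟨hz, hzp, hze⟩, fun w ⟨hw, hwp, hwe⟩ =>
    MASystem.eq_of_isEquilibrium_of_mem_compatClass hc hrb hw hwp hwe hz hzp hze⟩
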